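/- If f ~ N(μ, σ²) with σ > 0, then Var[Φ(f)] = Φ(a) − Φ(a)² − 2T(a, c), where a = μ/√(1+σ²), c = 1/√(1+2σ²), and T is Owen's T function. -/

import Mathlib

open MeasureTheory Real

/-- Standard normal density. -/
noncomputable def stdPdf (x : ℝ) : ℝ := (Real.sqrt (2 * Real.pi))⁻¹ * Real.exp (-x ^ 2 / 2)

/-- Standard normal CDF. -/
noncomputable def stdCdf (t : ℝ) : ℝ := ∫ s in Set.Iic t, stdPdf s

/-- Owen's T function. -/
noncomputable def owenT (h a : ℝ) : ℝ :=
  (2 * Real.pi)⁻¹ * ∫ x in (0:ℝ)..a, Real.exp (-h ^ 2 * (1 + x ^ 2) / 2) / (1 + x ^ 2)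

/-- Standard bivariate normal density with correlation ρ. -/
noncomputable def bvnPdf (ρ x y : ℝ) : ℝ :=
  Real.exp (-(x ^ 2 - 2 * ρ * x * y + y ^ 2) / (2 * (1 - ρ ^ 2))) /
    (2 * Real.pi * Real.sqrt (1 - ρ ^ 2))

/-- Standard bivariate normal CDF with correlation ρ. -/
noncomputable def bvn (u v ρ : ℝ) : ℝ :=
  ∫ p : ℝ × ℝ in Set.Iic u ×ˢ Set.Iic v, bvnPdf ρ p.1 p.2

/-- General bivariate Gaussian density with means μ₁ μ₂, std devs σ₁ σ₂, covariance σ₁₂. -/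
noncomputable def biGaussPdf (μ₁ μ₂ σ₁ σ₂ σ₁₂ x y : ℝ) : ℝ :=
  Real.exp (-(σ₂ ^ 2 * (x - μ₁) ^ 2 - 2 * σ₁₂ * (x - μ₁) * (y - μ₂) + σ₁ ^ 2 * (y - μ₂) ^ 2) /
      (2 * (σ₁ ^ 2 * σ₂ ^ 2 - σ₁₂ ^ 2))) /
    (2 * Real.pi * Real.sqrt (σ₁ ^ 2 * σ₂ ^ 2 - σ₁₂ ^ 2))

/-!
Write `f = μ + σ Z` with `Z` standard normal, so that `E[w(f)] = ∫ φ(x) w(a + b x) dx` with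
`a = μ`, `b = σ`. As functions of `a`, both moments and both closed forms tend to `0` as
`a → -∞`, so it suffices to match derivatives in `a`. Completing the square,
`φ(x) φ(a + b x) = φ(a/s) φ(s x + a b/s)` with `s = √(1 + b²)`: the derivative of `E[Φ(f)]` is
therefore `φ(a/s)/s`, and that of `E[Φ(f)²]` is `2 φ(a/s)/s · E[Φ(g)]` for another Gaussian `g`,
that is `2 φ(a/s)/s · Φ(a / (s √(1 + 2b²)))`. Since `∂ₕ T(h, c) = -φ(h) (Φ(c h) - 1/2)`, this is the
derivative of `Φ(a/s) - 2 T(a/s, 1/√(1 + 2b²))`.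
-/

open ProbabilityTheory Filter Set Topology

lemma stdPdf_eq_gaussianPDFReal : stdPdf = gaussianPDFReal 0 1 := by
  ext x
  simp [stdPdf, gaussianPDFReal]

lemma stdPdf_nonneg (x : ℝ) : 0 ≤ stdPdf x := by
  unfold stdPdf; positivity

lemma abs_stdPdf_le (x : ℝ) : |stdPdf x| ≤ (√(2 * π))⁻¹ := by
  rw [abs_of_nonneg (stdPdf_nonneg x), stdPdf]
  refine mul_le_of_le_one_right (by positivity) (Real.exp_le_one_iff.2 ?_)
  nlinarith [sq_nonneg x]

lemma stdPdf_neg (x : ℝ) : stdPdf (-x) = stdPdf x := by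
  simp [stdPdf]

@[fun_prop]
lemma continuous_stdPdf : Continuous stdPdf := by
  unfold stdPdf; fun_prop

lemma integrable_stdPdf : Integrable stdPdf := by
  rw [stdPdf_eq_gaussianPDFReal]; exact integrable_gaussianPDFReal 0 1

lemma integral_stdPdf : ∫ x, stdPdf x = 1 := by
  rw [stdPdf_eq_gaussianPDFReal]; exact integral_gaussianPDFReal_eq_one 0 one_ne_zero

lemma stdPdf_mul_stdPdf (a b x : ℝ) :
    stdPdf x * stdPdf (a + b * x) =
      stdPdf (a / √(1 + b ^ 2)) * stdPdf (√(1 + b ^ 2) * x + a * b / √(1 + b ^ 2)) := by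
  have hs : 0 < √(1 + b ^ 2) := Real.sqrt_pos.2 (by positivity)
  have hs2 : √(1 + b ^ 2) ^ 2 = 1 + b ^ 2 := Real.sq_sqrt (by positivity)
  have hexp : -x ^ 2 / 2 + -(a + b * x) ^ 2 / 2 =
      -(a / √(1 + b ^ 2)) ^ 2 / 2 + -(√(1 + b ^ 2) * x + a * b / √(1 + b ^ 2)) ^ 2 / 2 := by
    field_simp
    linear_combination (x ^ 2 * √(1 + b ^ 2) ^ 2 - a ^ 2) * hs2
  simp only [stdPdf]
  rw [mul_mul_mul_comm, ← Real.exp_add, hexp, Real.exp_add]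
  ring

lemma stdCdf_eq_cdf : stdCdf = cdf (gaussianReal 0 1) := by
  ext t
  rw [cdf_eq_real, measureReal_def, gaussianReal_apply_eq_integral 0 one_ne_zero,
    ENNReal.toReal_ofReal (setIntegral_nonneg measurableSet_Iic fun x _ =>
      gaussianPDFReal_nonneg 0 1 x), stdCdf, stdPdf_eq_gaussianPDFReal]

lemma stdCdf_nonneg (t : ℝ) : 0 ≤ stdCdf t := by
  rw [stdCdf_eq_cdf]; exact cdf_nonneg _ t

lemma stdCdf_le_one (t : ℝ) : stdCdf t ≤ 1 := by
  rw [stdCdf_eq_cdf]; exact cdf_le_one _ t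

lemma abs_stdCdf_le_one (t : ℝ) : |stdCdf t| ≤ 1 :=
  abs_le.2 ⟨by linarith [stdCdf_nonneg t], stdCdf_le_one t⟩

lemma tendsto_stdCdf_atBot : Tendsto stdCdf atBot (𝓝 0) := by
  rw [stdCdf_eq_cdf]; exact tendsto_cdf_atBot _

lemma stdCdf_sub_stdCdf (s t : ℝ) : stdCdf t - stdCdf s = ∫ x in s..t, stdPdf x := by
  unfold stdCdf
  exact intervalIntegral.integral_Iic_sub_Iic integrable_stdPdf.integrableOn
    integrable_stdPdf.integrableOn

lemma hasDerivAt_stdCdf (t : ℝ) : HasDerivAt stdCdf (stdPdf t) t := by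
  have h := intervalIntegral.integral_hasDerivAt_right (continuous_stdPdf.intervalIntegrable 0 t)
    (continuous_stdPdf.stronglyMeasurableAtFilter _ _) continuous_stdPdf.continuousAt
  refine (h.const_add (stdCdf 0)).congr_of_eventuallyEq (Eventually.of_forall fun u => ?_)
  simp only [← stdCdf_sub_stdCdf, add_sub_cancel]

lemma continuous_stdCdf : Continuous stdCdf :=
  continuous_iff_continuousAt.2 fun t => (hasDerivAt_stdCdf t).continuousAt

lemma stdCdf_zero : stdCdf 0 = 2⁻¹ := by
  have hsplit : stdCdf 0 + ∫ x in Ioi 0, stdPdf x = 1 := by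
    rw [← integral_stdPdf, stdCdf, ← setIntegral_union (Iic_disjoint_Ioi le_rfl)
      measurableSet_Ioi integrable_stdPdf.integrableOn integrable_stdPdf.integrableOn,
      Iic_union_Ioi, setIntegral_univ]
  have hsymm : ∫ x in Ioi 0, stdPdf x = stdCdf 0 := by
    simpa [stdPdf_neg, stdCdf] using (integral_comp_neg_Iic 0 stdPdf).symm
  linarith

lemma integral_comp_mul_add {E : Type*} [NormedAddCommGroup E] [NormedSpace ℝ E]
    (G : ℝ → E) (c d : ℝ) : ∫ x, G (c * x + d) = |c⁻¹| • ∫ y, G y := by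
  rw [Measure.integral_comp_mul_left (fun y => G (y + d)) c, integral_add_right_eq_self]

lemma integrable_stdPdf_mul {w : ℝ → ℝ} {C : ℝ} (hw : AEStronglyMeasurable w)
    (hwC : ∀ x, |w x| ≤ C) : Integrable fun x => stdPdf x * w x := by
  simpa only [mul_comm] using integrable_stdPdf.bdd_mul hw (ae_of_all _ hwC)

lemma hasDerivAt_integral_stdPdf_mul_comp {w w' : ℝ → ℝ} {C C' : ℝ}
    (hw : ∀ y, HasDerivAt w (w' y) y) (hwC : ∀ y, |w y| ≤ C) (hw'C : ∀ y, |w' y| ≤ C')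
    (a b : ℝ) :
    HasDerivAt (fun a => ∫ x, stdPdf x * w (a + b * x)) (∫ x, stdPdf x * w' (a + b * x)) a := by
  obtain rfl : w' = deriv w := funext fun y => (hw y).deriv.symm
  have hwc : Continuous w := continuous_iff_continuousAt.2 fun y => (hw y).continuousAt
  have hw'm := measurable_deriv w
  refine (hasDerivAt_integral_of_dominated_loc_of_deriv_le (bound := fun x => C' * stdPdf x)
    (F := fun a x => stdPdf x * w (a + b * x)) (F' := fun a x => stdPdf x * deriv w (a + b * x))
    (Metric.ball_mem_nhds a one_pos)
    (Eventually.of_forall fun a' =>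
      (by fun_prop : Continuous fun x => stdPdf x * w (a' + b * x)).aestronglyMeasurable)
    (integrable_stdPdf_mul (by fun_prop : Continuous fun x => w (a + b * x)).aestronglyMeasurable
      fun x => hwC _)
    (by fun_prop : Measurable fun x => stdPdf x * deriv w (a + b * x)).aestronglyMeasurable
    (ae_of_all _ fun x a' _ => ?_) (integrable_stdPdf.const_mul C')
    (ae_of_all _ fun x a' _ => ?_)).2
  · rw [Real.norm_eq_abs, abs_mul, abs_of_nonneg (stdPdf_nonneg x), mul_comm C']
    exact mul_le_mul_of_nonneg_left (hw'C _) (stdPdf_nonneg x)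
  · simpa using ((hw (a' + b * x)).comp a' ((hasDerivAt_id a').add_const (b * x))).const_mul
      (stdPdf x)

lemma tendsto_integral_stdPdf_mul_comp_atBot {w : ℝ → ℝ} {C : ℝ} (hw : Measurable w)
    (hwC : ∀ y, |w y| ≤ C) (hlim : Tendsto w atBot (𝓝 0)) (b : ℝ) :
    Tendsto (fun a => ∫ x, stdPdf x * w (a + b * x)) atBot (𝓝 0) := by
  rw [← integral_zero ℝ ℝ]
  refine tendsto_integral_filter_of_dominated_convergence (fun x => C * stdPdf x)
    (Eventually.of_forall fun a =>
      (by fun_prop : Measurable fun x => stdPdf x * w (a + b * x)).aestronglyMeasurable)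
    (Eventually.of_forall fun a => ae_of_all _ fun x => ?_) (integrable_stdPdf.const_mul C)
    (ae_of_all _ fun x => ?_)
  · rw [Real.norm_eq_abs, abs_mul, abs_of_nonneg (stdPdf_nonneg x), mul_comm C]
    exact mul_le_mul_of_nonneg_left (hwC _) (stdPdf_nonneg x)
  · simpa using (hlim.comp (tendsto_atBot_add_const_right _ (b * x) tendsto_id)).const_mul
      (stdPdf x)

lemma eq_of_hasDerivAt_of_tendsto_atBot {f g f' : ℝ → ℝ} (hf : ∀ x, HasDerivAt f (f' x) x)
    (hg : ∀ x, HasDerivAt g (f' x) x) (hlim : Tendsto (fun x => f x - g x) atBot (𝓝 0)) :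
    f = g := by
  have hderiv : ∀ x, HasDerivAt (f - g) 0 x := fun x => by simpa using (hf x).sub (hg x)
  have hconst : ∀ x, (f - g) x = (f - g) 0 := fun x =>
    is_const_of_deriv_eq_zero (fun x => (hderiv x).differentiableAt) (fun x => (hderiv x).deriv)
      x 0
  have hzero : (f - g) 0 = 0 :=
    tendsto_nhds_unique (tendsto_const_nhds.congr fun x => (hconst x).symm) hlim
  exact funext fun x => sub_eq_zero.1 ((hconst x).trans hzero)

lemma integral_stdPdf_mul_stdPdf_mul (a b : ℝ) (g : ℝ → ℝ) :
    ∫ x, stdPdf x * (stdPdf (a + b * x) * g x) =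
      stdPdf (a / √(1 + b ^ 2)) / √(1 + b ^ 2) *
        ∫ y, stdPdf y * g ((y - a * b / √(1 + b ^ 2)) / √(1 + b ^ 2)) := by
  set s := √(1 + b ^ 2)
  have hs : 0 < s := Real.sqrt_pos.2 (by positivity)
  have hsub := integral_comp_mul_add (fun y => stdPdf y * g ((y - a * b / s) / s)) s (a * b / s)
  simp only [add_sub_cancel_right, mul_div_cancel_left₀ _ hs.ne', smul_eq_mul,
    abs_inv, abs_of_pos hs] at hsub
  simp_rw [← mul_assoc, stdPdf_mul_stdPdf a b, mul_assoc, integral_const_mul]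
  rw [hsub]
  ring

lemma integral_stdPdf_mul_stdPdf (a b : ℝ) :
    ∫ x, stdPdf x * stdPdf (a + b * x) = stdPdf (a / √(1 + b ^ 2)) / √(1 + b ^ 2) := by
  have h := integral_stdPdf_mul_stdPdf_mul a b fun _ => 1
  simp only [mul_one, integral_stdPdf] at h
  exact h

theorem integral_stdPdf_mul_stdCdf (a b : ℝ) :
    ∫ x, stdPdf x * stdCdf (a + b * x) = stdCdf (a / √(1 + b ^ 2)) := by
  have hs : 0 < √(1 + b ^ 2) := Real.sqrt_pos.2 (by positivity)
  refine congrFun (eq_of_hasDerivAt_of_tendsto_atBot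
    (f := fun a => ∫ x, stdPdf x * stdCdf (a + b * x)) (g := fun a => stdCdf (a / √(1 + b ^ 2)))
    (f' := fun a => stdPdf (a / √(1 + b ^ 2)) / √(1 + b ^ 2)) (fun a => ?_) (fun a => ?_) ?_) a
  · rw [← integral_stdPdf_mul_stdPdf]
    exact hasDerivAt_integral_stdPdf_mul_comp hasDerivAt_stdCdf abs_stdCdf_le_one abs_stdPdf_le
      a b
  · have hdiv : HasDerivAt (fun a => a / √(1 + b ^ 2)) (√(1 + b ^ 2))⁻¹ a := by
      simpa using (hasDerivAt_id a).div_const √(1 + b ^ 2)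
    exact ((hasDerivAt_stdCdf _).comp a hdiv).congr_deriv (div_eq_mul_inv _ _).symm
  · simpa using (tendsto_integral_stdPdf_mul_comp_atBot continuous_stdCdf.measurable
      abs_stdCdf_le_one tendsto_stdCdf_atBot b).sub
      (tendsto_stdCdf_atBot.comp (tendsto_id.atBot_div_const hs))

lemma hasDerivAt_integral_exp_div_one_add_sq (c h : ℝ) :
    HasDerivAt (fun y => ∫ x in (0 : ℝ)..c, exp (-y ^ 2 * (1 + x ^ 2) / 2) / (1 + x ^ 2))
      (∫ x in (0 : ℝ)..c, -h * exp (-h ^ 2 * (1 + x ^ 2) / 2)) h := by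
  have hF : ∀ x y, HasDerivAt (fun y => exp (-y ^ 2 * (1 + x ^ 2) / 2) / (1 + x ^ 2))
      (-y * exp (-y ^ 2 * (1 + x ^ 2) / 2)) y := fun x y => by
    refine ((((hasDerivAt_pow 2 y).fun_neg.mul_const (1 + x ^ 2)).div_const 2).exp.div_const
      (1 + x ^ 2)).congr_deriv ?_
    field_simp
    ring
  have hbound : ∀ x, ∀ y ∈ Metric.ball h 1,
      ‖-y * exp (-y ^ 2 * (1 + x ^ 2) / 2)‖ ≤ |h| + 1 := by
    intro x y hy
    have hy' : |y| ≤ |h| + 1 := by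
      have := abs_sub_abs_le_abs_sub y h
      rw [Metric.mem_ball, Real.dist_eq] at hy
      linarith
    rw [norm_mul, norm_neg, Real.norm_eq_abs, Real.norm_of_nonneg (exp_pos _).le]
    refine (mul_le_of_le_one_right (abs_nonneg y) (exp_le_one_iff.2 ?_)).trans hy'
    nlinarith [sq_nonneg y, sq_nonneg (x * y)]
  have hcont : ∀ y, Continuous fun x : ℝ => exp (-y ^ 2 * (1 + x ^ 2) / 2) / (1 + x ^ 2) :=
    fun y => Continuous.div (by fun_prop) (by fun_prop) fun x => by positivity
  exact (intervalIntegral.hasDerivAt_integral_of_dominated_loc_of_deriv_le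
    (μ := volume) (a := 0) (b := c) (bound := fun _ => |h| + 1) (Metric.ball_mem_nhds h one_pos)
    (Eventually.of_forall fun y => (hcont y).aestronglyMeasurable)
    ((hcont h).intervalIntegrable _ _)
    (by fun_prop : Continuous fun x => -h * exp (-h ^ 2 * (1 + x ^ 2) / 2)).aestronglyMeasurable
    (ae_of_all _ fun x _ => hbound x) intervalIntegrable_const
    (ae_of_all _ fun x _ y _ => hF x y)).2

lemma exp_neg_sq_mul_one_add_sq (h x : ℝ) :
    exp (-h ^ 2 * (1 + x ^ 2) / 2) = 2 * π * stdPdf h * stdPdf (h * x) := by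
  rw [show -h ^ 2 * (1 + x ^ 2) / 2 = -h ^ 2 / 2 + -(h * x) ^ 2 / 2 by ring, exp_add]
  simp only [stdPdf]
  field_simp
  rw [Real.sq_sqrt (by positivity)]

lemma hasDerivAt_owenT (c h : ℝ) :
    HasDerivAt (fun h => owenT h c) (-(stdPdf h * (stdCdf (c * h) - 2⁻¹))) h := by
  have hval : ∫ x in (0 : ℝ)..c, -h * exp (-h ^ 2 * (1 + x ^ 2) / 2) =
      -(2 * π) * stdPdf h * (stdCdf (c * h) - 2⁻¹) := by
    have hpdf : ∀ x, -h * exp (-h ^ 2 * (1 + x ^ 2) / 2) =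
        -(2 * π) * stdPdf h * (h * stdPdf (h * x)) := fun x => by
      rw [exp_neg_sq_mul_one_add_sq]; ring
    simp_rw [hpdf, intervalIntegral.integral_const_mul,
      intervalIntegral.mul_integral_comp_mul_left, ← stdCdf_sub_stdCdf, mul_zero, stdCdf_zero,
      mul_comm h c]
  have := (hasDerivAt_integral_exp_div_one_add_sq c h).const_mul (2 * π)⁻¹
  rw [hval] at this
  exact this.congr_deriv (by field_simp)

lemma tendsto_owenT_atBot (c : ℝ) : Tendsto (fun h => owenT h c) atBot (𝓝 0) := by
  have hle : ∀ h, |owenT h c| ≤ (2 * π)⁻¹ * (exp (-h ^ 2 / 2) * |c|) := fun h => by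
    have := intervalIntegral.norm_integral_le_of_norm_le_const (a := 0) (b := c)
      (f := fun x => exp (-h ^ 2 * (1 + x ^ 2) / 2) / (1 + x ^ 2)) (C := exp (-h ^ 2 / 2))
      fun x _ => by
        rw [Real.norm_of_nonneg (by positivity)]
        refine div_le_of_le_mul₀ (by positivity) (exp_pos _).le ?_
        calc exp (-h ^ 2 * (1 + x ^ 2) / 2) ≤ exp (-h ^ 2 / 2) :=
              exp_le_exp.2 (by nlinarith [sq_nonneg (h * x)])
          _ ≤ exp (-h ^ 2 / 2) * (1 + x ^ 2) :=
              le_mul_of_one_le_right (exp_pos _).le (by nlinarith [sq_nonneg x])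
    rw [sub_zero] at this
    rw [owenT, abs_mul, abs_of_pos (by positivity : (0 : ℝ) < (2 * π)⁻¹), ← Real.norm_eq_abs]
    exact mul_le_mul_of_nonneg_left this (by positivity)
  have hexp : Tendsto (fun h : ℝ => exp (-h ^ 2 / 2)) atBot (𝓝 0) := by
    have hsq : Tendsto (fun h : ℝ => h * h / 2) atBot atTop :=
      (tendsto_id.atBot_mul_atBot₀ tendsto_id).atTop_div_const two_pos
    simpa [sq, neg_div] using hsq
  refine squeeze_zero_norm hle ?_
  simpa using (hexp.mul_const |c|).const_mul (2 * π)⁻¹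

lemma integral_stdPdf_mul_stdPdf_mul_stdCdf (a b : ℝ) :
    ∫ x, stdPdf x * (stdPdf (a + b * x) * stdCdf (a + b * x)) =
      stdPdf (a / √(1 + b ^ 2)) / √(1 + b ^ 2) *
        stdCdf (1 / √(1 + 2 * b ^ 2) * (a / √(1 + b ^ 2))) := by
  have hs : 0 < √(1 + b ^ 2) := Real.sqrt_pos.2 (by positivity)
  have hs2 : √(1 + b ^ 2) ^ 2 = 1 + b ^ 2 := Real.sq_sqrt (by positivity)
  have hk : 0 < √(1 + 2 * b ^ 2) := Real.sqrt_pos.2 (by positivity)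
  have hk2 : √(1 + 2 * b ^ 2) ^ 2 = 1 + 2 * b ^ 2 := Real.sq_sqrt (by positivity)
  have harg : ∀ y, a + b * ((y - a * b / √(1 + b ^ 2)) / √(1 + b ^ 2)) =
      a / √(1 + b ^ 2) ^ 2 + b / √(1 + b ^ 2) * y := fun y => by
    field_simp
    linear_combination a * hs2
  have hscale : a / √(1 + b ^ 2) ^ 2 / √(1 + (b / √(1 + b ^ 2)) ^ 2) =
      1 / √(1 + 2 * b ^ 2) * (a / √(1 + b ^ 2)) := by
    rw [show 1 + (b / √(1 + b ^ 2)) ^ 2 = (√(1 + 2 * b ^ 2) / √(1 + b ^ 2)) ^ 2 by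
      rw [div_pow, div_pow, hs2, hk2]; field_simp; ring, Real.sqrt_sq (by positivity)]
    field_simp
  rw [integral_stdPdf_mul_stdPdf_mul a b (fun x => stdCdf (a + b * x))]
  simp_rw [harg, integral_stdPdf_mul_stdCdf, hscale]

theorem integral_stdPdf_mul_stdCdf_sq (a b : ℝ) :
    ∫ x, stdPdf x * stdCdf (a + b * x) ^ 2 =
      stdCdf (a / √(1 + b ^ 2)) - 2 * owenT (a / √(1 + b ^ 2)) (1 / √(1 + 2 * b ^ 2)) := by
  have hs : 0 < √(1 + b ^ 2) := Real.sqrt_pos.2 (by positivity)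
  have hsq : ∀ y, |stdCdf y ^ 2| ≤ 1 := fun y => by
    rw [abs_pow]; exact pow_le_one₀ (abs_nonneg _) (abs_stdCdf_le_one y)
  refine congrFun (eq_of_hasDerivAt_of_tendsto_atBot
    (f := fun a => ∫ x, stdPdf x * stdCdf (a + b * x) ^ 2)
    (g := fun a =>
      stdCdf (a / √(1 + b ^ 2)) - 2 * owenT (a / √(1 + b ^ 2)) (1 / √(1 + 2 * b ^ 2)))
    (f' := fun a => 2 * (stdPdf (a / √(1 + b ^ 2)) / √(1 + b ^ 2) *
      stdCdf (1 / √(1 + 2 * b ^ 2) * (a / √(1 + b ^ 2)))))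
    (fun a => ?_) (fun a => ?_) ?_) a
  · rw [← integral_stdPdf_mul_stdPdf_mul_stdCdf, ← integral_const_mul]
    simp_rw [mul_left_comm (2 : ℝ)]
    refine hasDerivAt_integral_stdPdf_mul_comp (w := fun y => stdCdf y ^ 2)
      (w' := fun y => stdPdf y * (2 * stdCdf y)) (C' := (√(2 * π))⁻¹ * 2)
      (fun y => ((hasDerivAt_stdCdf y).fun_pow 2).congr_deriv (by simp; ring)) hsq
      (fun y => ?_) a b
    rw [abs_mul, abs_mul, abs_two]
    exact mul_le_mul (abs_stdPdf_le y) (by linarith [abs_stdCdf_le_one y]) (by positivity)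
      (by positivity)
  · have hdiv : HasDerivAt (fun a => a / √(1 + b ^ 2)) (√(1 + b ^ 2))⁻¹ a := by
      simpa using (hasDerivAt_id a).div_const √(1 + b ^ 2)
    exact (((hasDerivAt_stdCdf _).comp a hdiv).sub
      (((hasDerivAt_owenT _ _).comp a hdiv).const_mul 2)).congr_deriv (by ring)
  · simpa using (tendsto_integral_stdPdf_mul_comp_atBot (w := fun y => stdCdf y ^ 2)
      (continuous_stdCdf.pow 2).measurable hsq (by simpa using tendsto_stdCdf_atBot.pow 2)
      b).sub
      ((tendsto_stdCdf_atBot.comp (tendsto_id.atBot_div_const hs)).sub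
        (((tendsto_owenT_atBot _).comp (tendsto_id.atBot_div_const hs)).const_mul 2))

lemma integral_gaussianReal_eq_integral_stdPdf_mul (μ σ : ℝ) {g : ℝ → ℝ} (hg : Measurable g) :
    ∫ x, g x ∂gaussianReal μ ⟨σ ^ 2, sq_nonneg σ⟩ = ∫ x, stdPdf x * g (μ + σ * x) := by
  have hmap : (gaussianReal 0 1).map (fun x => μ + σ * x) =
      gaussianReal μ ⟨σ ^ 2, sq_nonneg σ⟩ := by
    rw [show (fun x => μ + σ * x) = (μ + ·) ∘ (σ * ·) from rfl,
      ← Measure.map_map (by fun_prop) (by fun_prop), gaussianReal_map_const_mul,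
      gaussianReal_map_const_add]
    congr 1
    · simp
    · exact mul_one _
  rw [← hmap, integral_map (by fun_prop) hg.aestronglyMeasurable,
    integral_gaussianReal_eq_integral_smul one_ne_zero, stdPdf_eq_gaussianPDFReal]
  rfl

theorem stmt_4_general (μ σ : ℝ) :
    (∫ x, stdCdf x ^ 2 ∂(ProbabilityTheory.gaussianReal μ ⟨σ ^ 2, sq_nonneg σ⟩)) -
        (∫ x, stdCdf x ∂(ProbabilityTheory.gaussianReal μ ⟨σ ^ 2, sq_nonneg σ⟩)) ^ 2 =
      stdCdf (μ / Real.sqrt (1 + σ ^ 2)) - stdCdf (μ / Real.sqrt (1 + σ ^ 2)) ^ 2 -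
        2 * owenT (μ / Real.sqrt (1 + σ ^ 2)) (1 / Real.sqrt (1 + 2 * σ ^ 2)) := by
  rw [integral_gaussianReal_eq_integral_stdPdf_mul μ σ (g := fun x => stdCdf x ^ 2)
      (continuous_stdCdf.pow 2).measurable,
    integral_gaussianReal_eq_integral_stdPdf_mul μ σ continuous_stdCdf.measurable,
    integral_stdPdf_mul_stdCdf_sq, integral_stdPdf_mul_stdCdf]
  ring

theorem stmt_4 (μ σ : ℝ) (hσ : 0 < σ) :
    (∫ x, stdCdf x ^ 2 ∂(ProbabilityTheory.gaussianReal μ ⟨σ ^ 2, sq_nonneg σ⟩)) -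
        (∫ x, stdCdf x ∂(ProbabilityTheory.gaussianReal μ ⟨σ ^ 2, sq_nonneg σ⟩)) ^ 2 =
      stdCdf (μ / Real.sqrt (1 + σ ^ 2)) - stdCdf (μ / Real.sqrt (1 + σ ^ 2)) ^ 2 -
        2 * owenT (μ / Real.sqrt (1 + σ ^ 2)) (1 / Real.sqrt (1 + 2 * σ ^ 2)) :=
  stmt_4_general μ σ
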